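/- arXiv:1308.6833 — 5 statements merged into one kernel-verified Lean document; each statement's English description precedes it below -/
import Mathlib

section
/- The Motzkin polynomial M(x,y) = x⁴y² + x²y⁴ - 3x²y² + 1 is not a sum of squares of polynomials: there do not exist polynomials q₁, ..., q_r ∈ ℝ[x,y] with M = q₁² + ⋯ + q_r². -/
/-!
If `M = ∑ qᵢ²`, no exponent of a `qᵢ` sticks out of half the Newton polygon of `M`: let `d`
maximise a linear functional over the supports of all the `qᵢ`, with ties broken
lexicographically. Then `d` is not the midpoint of two other such exponents, so the coefficient of
`2d` in `∑ qᵢ²` is `∑ (coeff d qᵢ)² > 0`, and `2d` is an exponent of `M`.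

For the Motzkin polynomial, half the Newton polygon is the triangle with vertices `(0,0)`, `(2,1)`,
`(1,2)`, and its only lattice points summing to `(2,2)` are `(1,1) + (1,1)`. Hence the coefficient
of `x²y²` in `∑ qᵢ²` is a sum of squares, whereas in `M` it is `-3`.
-/

open MvPolynomial

def IsMidpointExtreme {M : Type*} [Add M] (S : Set M) (d : M) : Prop :=
  ∀ a ∈ S, ∀ b ∈ S, a + b = d + d → a = d

theorem Finset.exists_isMidpointExtreme_max_image {σ Γ : Type*} [LinearOrder σ] [AddCommMonoid Γ]
    [LinearOrder Γ] [IsOrderedCancelAddMonoid Γ] (f : (σ →₀ ℕ) →+ Γ) {T : Finset (σ →₀ ℕ)}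
    (hT : T.Nonempty) :
    ∃ d ∈ T, (∀ m ∈ T, f m ≤ f d) ∧ IsMidpointExtreme (T : Set (σ →₀ ℕ)) d := by
  obtain ⟨d₀, hd₀T, hd₀⟩ := T.exists_max_image f hT
  obtain ⟨d, hdF, hd⟩ := (T.filter (f · = f d₀)).exists_max_image toLex ⟨d₀, by simp [hd₀T]⟩
  rw [Finset.mem_filter] at hdF
  refine ⟨d, hdF.1, hdF.2 ▸ hd₀, fun a ha b hb hab => ?_⟩
  have hf : f a = f d ∧ f b = f d :=
    (add_eq_add_iff_eq_and_eq (hdF.2 ▸ hd₀ a ha) (hdF.2 ▸ hd₀ b hb)).1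
      (by rw [← map_add, hab, map_add])
  have ha_le := hd a (Finset.mem_filter.2 ⟨ha, hf.1.trans hdF.2⟩)
  have hb_le := hd b (Finset.mem_filter.2 ⟨hb, hf.2.trans hdF.2⟩)
  exact ((add_eq_add_iff_eq_and_eq ha_le hb_le).1 (by rw [← toLex_add, hab, toLex_add])).1

namespace MvPolynomial

variable {σ R ι : Type*}

theorem coeff_add_self_sq_of_isMidpointExtreme [CommSemiring R] {q : MvPolynomial σ R}
    {S : Set (σ →₀ ℕ)} {d : σ →₀ ℕ} (hq : ↑q.support ⊆ S) (hd : IsMidpointExtreme S d) :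
    coeff (d + d) (q ^ 2) = coeff d q ^ 2 := by
  classical
  rw [sq, sq, coeff_mul, Finset.sum_eq_single_of_mem (d, d) (by simp)]
  rintro ⟨a, b⟩ hab hne
  rw [Finset.HasAntidiagonal.mem_antidiagonal] at hab
  have : coeff a q = 0 ∨ coeff b q = 0 := by
    by_contra! h
    have had : a = d := hd a (hq (mem_support_iff.2 h.1)) b (hq (mem_support_iff.2 h.2)) hab
    subst had
    exact hne (Prod.ext rfl (add_left_cancel hab))
  rcases this with h | h <;> simp [h]

theorem coeff_add_self_sum_sq_of_isMidpointExtreme [CommSemiring R] [Fintype ι]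
    {q : ι → MvPolynomial σ R} {S : Set (σ →₀ ℕ)} {d : σ →₀ ℕ} (hq : ∀ i, ↑(q i).support ⊆ S)
    (hd : IsMidpointExtreme S d) :
    coeff (d + d) (∑ i, q i ^ 2) = ∑ i, coeff d (q i) ^ 2 := by
  simp only [coeff_sum, coeff_add_self_sq_of_isMidpointExtreme (hq _) hd]

theorem map_add_self_le_of_support_sum_sq_le {Γ : Type*} [AddCommMonoid Γ] [LinearOrder Γ]
    [IsOrderedCancelAddMonoid Γ] [CommRing R] [LinearOrder R] [IsStrictOrderedRing R] [Fintype ι]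
    (q : ι → MvPolynomial σ R) (f : (σ →₀ ℕ) →+ Γ) {c : Γ}
    (hc : ∀ n ∈ (∑ i, q i ^ 2).support, f n ≤ c) (i : ι) {m : σ →₀ ℕ} (hm : m ∈ (q i).support) :
    f (m + m) ≤ c := by
  classical
  let _ : LinearOrder σ := WellOrderingRel.isWellOrder.linearOrder
  let T := Finset.univ.biUnion fun i => (q i).support
  have hqT : ∀ i, ↑(q i).support ⊆ (T : Set (σ →₀ ℕ)) := fun i n hn =>
    Finset.mem_biUnion.2 ⟨i, Finset.mem_univ i, hn⟩
  obtain ⟨d, hdT, hdmax, hd⟩ := Finset.exists_isMidpointExtreme_max_image f ⟨m, hqT i hm⟩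
  obtain ⟨j, -, hj⟩ := Finset.mem_biUnion.1 hdT
  have hpos : 0 < ∑ i, coeff d (q i) ^ 2 :=
    Finset.sum_pos' (fun _ _ => sq_nonneg _)
      ⟨j, Finset.mem_univ j, pow_two_pos_of_ne_zero (mem_support_iff.1 hj)⟩
  have hdd : d + d ∈ (∑ i, q i ^ 2).support := by
    rw [mem_support_iff, coeff_add_self_sum_sq_of_isMidpointExtreme hqT hd]
    exact hpos.ne'
  calc f (m + m) = f m + f m := map_add f m m
    _ ≤ f d + f d := add_le_add (hdmax m (hqT i hm)) (hdmax m (hqT i hm))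
    _ = f (d + d) := (map_add f d d).symm
    _ ≤ c := hc _ hdd

end MvPolynomial

theorem Finsupp.weight_fin_two (a b : ℤ) (m : Fin 2 →₀ ℕ) :
    Finsupp.weight ![a, b] m = m 0 * a + m 1 * b := by
  simp [Finsupp.weight_eq_sum, Fin.sum_univ_two]

noncomputable def motzkin : MvPolynomial (Fin 2) ℝ :=
  X 0 ^ 4 * X 1 ^ 2 + X 0 ^ 2 * X 1 ^ 4 - 3 * X 0 ^ 2 * X 1 ^ 2 + 1

theorem coeff_motzkin (n : Fin 2 →₀ ℕ) :
    coeff n motzkin = (if n 0 = 4 ∧ n 1 = 2 then 1 else 0) + (if n 0 = 2 ∧ n 1 = 4 then 1 else 0)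
      - (if n 0 = 2 ∧ n 1 = 2 then 3 else 0) + (if n 0 = 0 ∧ n 1 = 0 then 1 else 0) := by
  have h3 : (3 : MvPolynomial (Fin 2) ℝ) = C 3 := rfl
  simp only [motzkin, h3, X_pow_eq_monomial, monomial_mul, C_mul_monomial, coeff_add, coeff_sub,
    coeff_monomial, coeff_one, Finsupp.ext_iff, Fin.forall_fin_two]
  simp [eq_comm]

/-- The lattice points of the triangle with vertices `(0,0)`, `(2k,k)`, `(k,2k)`. -/
def motzkinTriangle (k : ℕ) : Set (Fin 2 →₀ ℕ) :=
  {m | m 0 + m 1 ≤ 3 * k ∧ m 0 ≤ 2 * m 1 ∧ m 1 ≤ 2 * m 0}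

theorem support_motzkin_subset : ↑motzkin.support ⊆ motzkinTriangle 2 := by
  intro n hn
  rw [Finset.mem_coe, mem_support_iff, coeff_motzkin] at hn
  split_ifs at hn <;> first | exact ⟨by omega, by omega, by omega⟩ | norm_num at hn

theorem support_subset_motzkinTriangle_of_motzkin_eq_sum_sq {ι : Type*} [Fintype ι]
    {q : ι → MvPolynomial (Fin 2) ℝ} (h : motzkin = ∑ i, q i ^ 2) (i : ι) :
    ↑(q i).support ⊆ motzkinTriangle 1 := by
  intro m hm
  have bound (a b c : ℤ) (hc : ∀ n ∈ motzkinTriangle 2, n 0 * a + n 1 * b ≤ c) :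
      ↑(m 0 + m 0) * a + ↑(m 1 + m 1) * b ≤ c := by
    simpa only [Finsupp.weight_fin_two, Finsupp.add_apply] using
      map_add_self_le_of_support_sum_sq_le q (Finsupp.weight ![a, b])
        (fun n hn => (Finsupp.weight_fin_two a b n).trans_le
          (hc n (support_motzkin_subset (h ▸ hn)))) i hm
  -- the three edges of the triangle
  have h₁ := bound 1 1 6 fun n ⟨_, _, _⟩ => by omega
  have h₂ := bound 1 (-2) 0 fun n ⟨_, _, _⟩ => by omega
  have h₃ := bound (-2) 1 0 fun n ⟨_, _, _⟩ => by omega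
  exact ⟨by omega, by omega, by omega⟩

theorem isMidpointExtreme_motzkinTriangle_one :
    IsMidpointExtreme (motzkinTriangle 1) (Finsupp.single 0 1 + Finsupp.single 1 1) := by
  rintro a ⟨_, _, _⟩ b ⟨_, _, _⟩ hab
  simp only [Finsupp.ext_iff, Fin.forall_fin_two, Finsupp.add_apply, Finsupp.single_apply,
    if_true, one_ne_zero, zero_ne_one, if_false] at hab ⊢
  omega

theorem motzkin_not_sos :
    ¬ ∃ (r : ℕ) (q : Fin r → MvPolynomial (Fin 2) ℝ),
      (X 0) ^ 4 * (X 1) ^ 2 + (X 0) ^ 2 * (X 1) ^ 4 - 3 * (X 0) ^ 2 * (X 1) ^ 2 + 1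
        = ∑ i, (q i) ^ 2 := by
  rintro ⟨r, q, h : motzkin = _⟩
  let d : Fin 2 →₀ ℕ := Finsupp.single 0 1 + Finsupp.single 1 1
  have hx2y2 : coeff (d + d) motzkin = -3 := by
    rw [coeff_motzkin]
    norm_num [d]
  have hsos : coeff (d + d) motzkin = ∑ i, coeff d (q i) ^ 2 :=
    h ▸ coeff_add_self_sum_sq_of_isMidpointExtreme
      (support_subset_motzkinTriangle_of_motzkin_eq_sum_sq h) isMidpointExtreme_motzkinTriangle_one
  have hnonneg : 0 ≤ ∑ i, coeff d (q i) ^ 2 := Finset.sum_nonneg fun i _ => sq_nonneg _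
  linarith
end

section
/- For the planar vector field ẋ₁ = -x₁³x₂² + 2x₁³x₂ - x₁³ + 4x₁²x₂² - 8x₁²x₂ + 4x₁² - x₁x₂⁴ + 4x₁x₂³ - 4x₁ + 10x₂², ẋ₂ = -9x₁²x₂ + 10x₁² + 2x₁x₂³ - 8x₁x₂² - 4x₁ - x₂³ + 4x₂² - 4x₂, the function V(x₁,x₂) = ½x₁² + ½x₂² satisfies the identity V̇(x₁,x₂) := x₁·ẋ₁ + x₂·ẋ₂ = -M(x₁-1, x₂-1), where M(a,b) = a⁴b² + a²b⁴ - 3a²b² + 1 is the Motzkin polynomial. In particular V̇ ≤ 0 everywhere. -/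
theorem vdot_eq_neg_shifted_motzkin :
    ∀ x1 x2 : ℝ,
      x1 * (-x1 ^ 3 * x2 ^ 2 + 2 * x1 ^ 3 * x2 - x1 ^ 3 + 4 * x1 ^ 2 * x2 ^ 2
            - 8 * x1 ^ 2 * x2 + 4 * x1 ^ 2 - x1 * x2 ^ 4 + 4 * x1 * x2 ^ 3
            - 4 * x1 + 10 * x2 ^ 2)
      + x2 * (-9 * x1 ^ 2 * x2 + 10 * x1 ^ 2 + 2 * x1 * x2 ^ 3 - 8 * x1 * x2 ^ 2
            - 4 * x1 - x2 ^ 3 + 4 * x2 ^ 2 - 4 * x2)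
      = -((x1 - 1) ^ 4 * (x2 - 1) ^ 2 + (x1 - 1) ^ 2 * (x2 - 1) ^ 4
            - 3 * (x1 - 1) ^ 2 * (x2 - 1) ^ 2 + 1) ∧
      x1 * (-x1 ^ 3 * x2 ^ 2 + 2 * x1 ^ 3 * x2 - x1 ^ 3 + 4 * x1 ^ 2 * x2 ^ 2
            - 8 * x1 ^ 2 * x2 + 4 * x1 ^ 2 - x1 * x2 ^ 4 + 4 * x1 * x2 ^ 3
            - 4 * x1 + 10 * x2 ^ 2)
      + x2 * (-9 * x1 ^ 2 * x2 + 10 * x1 ^ 2 + 2 * x1 * x2 ^ 3 - 8 * x1 * x2 ^ 2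
            - 4 * x1 - x2 ^ 3 + 4 * x2 ^ 2 - 4 * x2) ≤ 0 := by

  intro x1 x2
  have hM : ∀ a b : ℝ, 0 ≤ a ^ 4 * b ^ 2 + a ^ 2 * b ^ 4 - 3 * a ^ 2 * b ^ 2 + 1 := by
    intro a b
    nlinarith [sq_nonneg (a*b), sq_nonneg (a^2*b + a*b^2), sq_nonneg (a^2*b - a*b^2),
      sq_nonneg (a*b*(a*b-1)), sq_nonneg (a*b+1), sq_nonneg (a*b-1),
      sq_nonneg (a^2*b^2 - 1), sq_nonneg a, sq_nonneg b]
  have heq : x1 * (-x1 ^ 3 * x2 ^ 2 + 2 * x1 ^ 3 * x2 - x1 ^ 3 + 4 * x1 ^ 2 * x2 ^ 2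
            - 8 * x1 ^ 2 * x2 + 4 * x1 ^ 2 - x1 * x2 ^ 4 + 4 * x1 * x2 ^ 3
            - 4 * x1 + 10 * x2 ^ 2)
      + x2 * (-9 * x1 ^ 2 * x2 + 10 * x1 ^ 2 + 2 * x1 * x2 ^ 3 - 8 * x1 * x2 ^ 2
            - 4 * x1 - x2 ^ 3 + 4 * x2 ^ 2 - 4 * x2)
      = -((x1 - 1) ^ 4 * (x2 - 1) ^ 2 + (x1 - 1) ^ 2 * (x2 - 1) ^ 4
            - 3 * (x1 - 1) ^ 2 * (x2 - 1) ^ 2 + 1) := by ring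
  refine ⟨heq, ?_⟩
  rw [heq]
  linarith [hM (x1-1) (x2-1)]
end

section
/- Let f be the vector field of the previous context (with V̇ for ½(x₁²+x₂²) equal to -M(x₁-1,x₂-1)). If U(x₁,x₂) = c₁x₁² + c₂x₁x₂ + c₃x₂² is a quadratic form such that -U̇(x) := -⟨∇U(x), f(x)⟩ ≥ 0 for all x ∈ ℝ², then c₂ = 0 and c₁ = c₃; i.e., U is a scalar multiple of x₁² + x₂². -/
theorem unique_quadratic_lyapunov (c1 c2 c3 : ℝ)
    (h : ∀ x1 x2 : ℝ,
      0 ≤ -((2 * c1 * x1 + c2 * x2) *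
              (-x1 ^ 3 * x2 ^ 2 + 2 * x1 ^ 3 * x2 - x1 ^ 3 + 4 * x1 ^ 2 * x2 ^ 2
                - 8 * x1 ^ 2 * x2 + 4 * x1 ^ 2 - x1 * x2 ^ 4 + 4 * x1 * x2 ^ 3
                - 4 * x1 + 10 * x2 ^ 2)
            + (c2 * x1 + 2 * c3 * x2) *
              (-9 * x1 ^ 2 * x2 + 10 * x1 ^ 2 + 2 * x1 * x2 ^ 3 - 8 * x1 * x2 ^ 2
                - 4 * x1 - x2 ^ 3 + 4 * x2 ^ 2 - 4 * x2))) :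
    c2 = 0 ∧ c1 = c3 := by
  have h02 := h 0 2
  have h22 := h 2 2
  have hc2le : c2 ≤ 0 := by nlinarith [h02]
  have hc13 : c1 ≤ c3 := by nlinarith [h22]
  have hc2 : c2 = 0 := by
    by_contra hne
    have hc2lt : c2 < 0 := lt_of_le_of_ne hc2le hne
    set s : ℝ := max 2 ((2 * c3 + 1) / (-c2)) with hs
    have hs2 : (2:ℝ) ≤ s := le_max_left _ _
    have hsdiv : (2 * c3 + 1) / (-c2) ≤ s := le_max_right _ _
    have hpos : (0:ℝ) < -c2 := by linarith
    have hsc2 : 2 * c3 + 1 ≤ s * (-c2) := by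
      rw [div_le_iff₀ hpos] at hsdiv; linarith [hsdiv]
    have hline := h (-s) 1
    -- 0 ≤ (2s²+20s)(c1-c3) + (s³+10s²-2s-10)c2 + 2c3
    nlinarith [hline, hsc2, mul_nonneg (mul_nonneg (by linarith : (0:ℝ) ≤ s) (by linarith : (0:ℝ) ≤ s)) (by linarith : (0:ℝ) ≤ s - 2),
      mul_nonneg (by linarith : (0:ℝ) ≤ s) (by linarith : (0:ℝ) ≤ s - 2),
      mul_nonpos_of_nonneg_of_nonpos (by positivity : (0:ℝ) ≤ 2 * s ^ 2 + 20 * s) (by linarith : c1 - c3 ≤ 0),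
      mul_nonneg (mul_nonneg (by nlinarith [hs2] : (0:ℝ) ≤ s ^ 2 + 11 * s + 20) (by linarith : (0:ℝ) ≤ s - 2)) (by linarith : 0 ≤ -c2)]
  have hc31 : c3 ≤ c1 := by
    by_contra hlt
    push_neg at hlt
    set t : ℝ := max 11 ((c3 + 1) / (c3 - c1)) with ht
    have ht11 : (11:ℝ) ≤ t := le_max_left _ _
    have hpos : (0:ℝ) < c3 - c1 := by linarith
    have htdiv : (c3 + 1) / (c3 - c1) ≤ t := le_max_right _ _
    have htc : c3 + 1 ≤ t * (c3 - c1) := by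
      rw [div_le_iff₀ hpos] at htdiv; linarith
    have hline := h t 1
    rw [hc2] at hline
    -- 0 ≤ (2t²-20t)(c1-c3) + 2c3
    nlinarith [hline, htc, mul_nonneg (mul_nonneg (by linarith : (0:ℝ) ≤ t) (by linarith : (0:ℝ) ≤ t - 11)) (by linarith : 0 ≤ c3 - c1),
      mul_nonneg (by linarith : (0:ℝ) ≤ t - 11) (by linarith : 0 ≤ c3 - c1)]
  exact ⟨hc2, le_antisymm hc13 hc31⟩
end

section
/- Suppose V : ℝⁿ → ℝ is a polynomial, k is a nonnegative integer, and the polynomial (-2V·V̇)·V^{2k} is a sum of squares, where V̇ = ⟨∇V, f⟩ for a polynomial vector field f. Then W := V^{2k+2} is a sum of squares and -Ẇ = -⟨∇W, f⟩ = (k+1)·(-2V·V̇)·V^{2k} is also a sum of squares. -/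
open MvPolynomial

/-- A polynomial is a sum of squares. -/
def IsSOS {n : ℕ} (p : MvPolynomial (Fin n) ℝ) : Prop :=
  ∃ (r : ℕ) (q : Fin r → MvPolynomial (Fin n) ℝ), p = ∑ i, (q i) ^ 2

theorem power_lyapunov_sos {n : ℕ} (V : MvPolynomial (Fin n) ℝ)
    (f : Fin n → MvPolynomial (Fin n) ℝ) (k : ℕ)
    (h : IsSOS ((-2 * V * ∑ i, (pderiv i V) * f i) * V ^ (2 * k))) :
    IsSOS (V ^ (2 * k + 2)) ∧
    (-(∑ i, (pderiv i (V ^ (2 * k + 2))) * f i)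
        = ((k : MvPolynomial (Fin n) ℝ) + 1) *
          ((-2 * V * ∑ i, (pderiv i V) * f i) * V ^ (2 * k))) ∧
    IsSOS (-(∑ i, (pderiv i (V ^ (2 * k + 2))) * f i)) := by
  have hid : (-(∑ i, (pderiv i (V ^ (2 * k + 2))) * f i)
        = ((k : MvPolynomial (Fin n) ℝ) + 1) *
          ((-2 * V * ∑ i, (pderiv i V) * f i) * V ^ (2 * k))) := by
    have hp : ∀ i, pderiv i (V ^ (2 * k + 2)) = (2 * k + 2) * V ^ (2 * k + 1) * pderiv i V := by
      intro i
      rw [Derivation.leibniz_pow]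
      simp [nsmul_eq_mul]
      ring
    simp only [hp, Finset.mul_sum, Finset.sum_mul, neg_eq_iff_eq_neg, ← Finset.sum_neg_distrib]
    exact Finset.sum_congr rfl fun i _ => by ring
  refine ⟨⟨1, fun _ => V ^ (k + 1), by simp; ring⟩, hid, ?_⟩
  obtain ⟨r, q, hq⟩ := h
  refine ⟨r, fun i => C (Real.sqrt (k + 1)) * q i, ?_⟩
  rw [hid, hq, Finset.mul_sum]
  congr 1; ext i
  have : (Real.sqrt ((k:ℝ) + 1))^2 = (k:ℝ) + 1 := Real.sq_sqrt (by positivity)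
  rw [mul_pow, ← C_pow, this,
    show ((k : MvPolynomial (Fin n) ℝ) + 1) = C ((k : ℝ) + 1) by simp [map_add, map_natCast]]
end

section
/- A nonnegative binary form is a sum of squares: if p ∈ ℝ[x,y] is homogeneous of degree 2d and p(x,y) ≥ 0 for all (x,y) ∈ ℝ², then p can be written as a sum of (at most two) squares of polynomials in ℝ[x,y]. -/
/-!
Setting `y = 1` turns `p` into a nonnegative univariate polynomial `f` of degree at most `2d`.
Every complex root `z` of `f` yields the real factor `(X - re z)² + (im z)²` of `f`: for non-real
`z` together with its conjugate, and for real `z` because a real root of a nonnegative polynomial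
is a local minimum, hence a double root. The cofactor is again nonnegative, so induction on the
degree and the identity `(a² + b²)(c² + e²) = (ac - be)² + (ae + bc)²` give `f = a² + b²`.
The leading coefficients of `a²` and `b²` cannot cancel, so `a` and `b` have degree at most `d`,
and homogenizing them to degree `d` gives back `p`.
-/

namespace Polynomial

lemma natDegree_sq_add_sq {R : Type*} [CommRing R] [LinearOrder R] [IsStrictOrderedRing R]
    (a b : R[X]) : (a ^ 2 + b ^ 2).natDegree = 2 * max a.natDegree b.natDegree := by
  obtain ⟨m, hm⟩ : ∃ m, max a.natDegree b.natDegree = m := ⟨_, rfl⟩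
  have ham : a.natDegree ≤ m := hm ▸ le_max_left _ _
  have hbm : b.natDegree ≤ m := hm ▸ le_max_right _ _
  rw [hm]
  refine le_antisymm ?_ ?_
  · refine (natDegree_add_le _ _).trans (max_le ?_ ?_) <;>
      exact natDegree_pow_le.trans (by omega)
  rcases eq_or_ne m 0 with rfl | hm0
  · exact Nat.zero_le _
  have hlead : a.coeff m ≠ 0 ∨ b.coeff m ≠ 0 := by
    rcases max_choice a.natDegree b.natDegree with hmax | hmax <;> rw [hm] at hmax <;> subst hmax
    · exact .inl (leadingCoeff_ne_zero.2 (ne_zero_of_natDegree_gt (Nat.pos_of_ne_zero hm0)))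
    · exact .inr (leadingCoeff_ne_zero.2 (ne_zero_of_natDegree_gt (Nat.pos_of_ne_zero hm0)))
  have hcoeff : (a ^ 2 + b ^ 2).coeff (2 * m) = a.coeff m ^ 2 + b.coeff m ^ 2 := by
    rw [coeff_add, coeff_pow_of_natDegree_le ham, coeff_pow_of_natDegree_le hbm]
  refine le_natDegree_of_ne_zero (hcoeff ▸ (ne_of_gt ?_))
  rcases hlead with h | h <;> positivity

lemma eval_nonneg_of_eval_mul_nonneg {q h : ℝ[X]} (hqh : ∀ t, 0 ≤ (q * h).eval t) {r : ℝ}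
    (hq : ∀ t ≠ r, 0 < q.eval t) (t : ℝ) : 0 ≤ h.eval t := by
  have hclosed : IsClosed {t | 0 ≤ h.eval t} := isClosed_le continuous_const h.continuous
  have hsub : {r}ᶜ ⊆ {t | 0 ≤ h.eval t} := fun t ht =>
    nonneg_of_mul_nonneg_right (by simpa using hqh t) (hq t ht)
  exact hclosed.closure_subset_iff.2 hsub ((dense_compl_singleton r).closure_eq ▸ Set.mem_univ t)

lemma sq_X_sub_C_dvd_of_nonneg_of_isRoot {f : ℝ[X]} (hf : ∀ t, 0 ≤ f.eval t) {r : ℝ}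
    (hr : f.IsRoot r) : (X - C r) ^ 2 ∣ f := by
  rcases eq_or_ne f 0 with rfl | hf0
  · exact dvd_zero _
  have hmin : IsLocalMin (fun t => f.eval t) r :=
    Filter.Eventually.of_forall fun t => by simpa [hr.eq_zero] using hf t
  have hderiv : (derivative f).eval r = 0 := by
    simpa only [Polynomial.deriv] using hmin.deriv_eq_zero
  rw [← le_rootMultiplicity_iff hf0]
  exact (one_lt_rootMultiplicity_iff_isRoot hf0).2 ⟨hr, hderiv⟩

lemma sq_add_sq_dvd_of_nonneg_of_aeval_eq_zero {f : ℝ[X]} (hf : ∀ t, 0 ≤ f.eval t) {z : ℂ}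
    (hz : aeval z f = 0) : (X - C z.re) ^ 2 + C z.im ^ 2 ∣ f := by
  rcases eq_or_ne z.im 0 with him | him
  · have hzre : z = z.re := Complex.ext rfl (by simpa using him)
    rw [hzre] at hz
    have hr : f.IsRoot z.re := Complex.ofReal_eq_zero.1 <| (ofReal_eval f z.re).trans hz
    simpa [him] using sq_X_sub_C_dvd_of_nonneg_of_isRoot hf hr
  · convert f.quadratic_dvd_of_aeval_eq_zero_im_ne_zero hz him using 1
    rw [Complex.sq_norm, Complex.normSq_apply]
    simp only [map_mul, map_add, map_ofNat]
    ring

theorem exists_eq_sq_add_sq_of_nonneg (f : ℝ[X]) (hf : ∀ t, 0 ≤ f.eval t) :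
    ∃ a b : ℝ[X], f = a ^ 2 + b ^ 2 := by
  induction hn : f.natDegree using Nat.strong_induction_on generalizing f with
  | _ n ih =>
  rcases eq_or_ne n 0 with rfl | hn0
  · refine ⟨C √(f.coeff 0), 0, ?_⟩
    rw [← C_pow, Real.sq_sqrt (coeff_zero_eq_eval_zero f ▸ hf 0), zero_pow two_ne_zero,
      add_zero]
    exact eq_C_of_natDegree_eq_zero hn
  obtain ⟨z, hz⟩ :=
    IsAlgClosed.exists_aeval_eq_zero ℂ f (mt natDegree_eq_of_degree_eq_some (hn ▸ hn0))
  obtain ⟨h, rfl⟩ := sq_add_sq_dvd_of_nonneg_of_aeval_eq_zero hf hz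
  have hq_pos : ∀ t ≠ z.re, 0 < ((X - C z.re) ^ 2 + C z.im ^ 2).eval t := fun t ht => by
    simp only [eval_add, eval_pow, eval_sub, eval_X, eval_C]
    have : t - z.re ≠ 0 := sub_ne_zero.2 ht
    positivity
  have hq_deg : ((X - C z.re) ^ 2 + C z.im ^ 2).natDegree = 2 := by
    rw [← C_pow, natDegree_add_C, natDegree_pow, natDegree_X_sub_C]
  have hh0 : h ≠ 0 := by rintro rfl; simp at hn; omega
  have hlt : h.natDegree < n := by
    rw [← hn, natDegree_mul (ne_zero_of_natDegree_gt (hq_deg ▸ one_lt_two)) hh0, hq_deg]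
    omega
  obtain ⟨a, b, rfl⟩ := ih h.natDegree hlt h (eval_nonneg_of_eval_mul_nonneg hf hq_pos) rfl
  exact ⟨_, _, sq_add_sq_mul_sq_add_sq⟩

end Polynomial

namespace MvPolynomial

lemma natDegree_aeval_X_one_le {R : Type*} [CommSemiring R] {p : MvPolynomial (Fin 2) R} {n : ℕ}
    (hp : p.IsHomogeneous n) : (aeval ![Polynomial.X, 1] p : Polynomial R).natDegree ≤ n := by
  rw [p.as_sum, map_sum]
  refine Polynomial.natDegree_sum_le_of_forall_le _ _ fun m hm => ?_
  have hdeg : m 0 + m 1 = n := by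
    simpa [Finsupp.weight_apply, Finsupp.sum_fintype] using hp (mem_support_iff.1 hm)
  rw [aeval_monomial]
  simp only [Polynomial.algebraMap_eq, pow_zero, implies_true, Finsupp.prod_fintype,
    Fin.prod_univ_two, Matrix.cons_val_zero, Matrix.cons_val_one, Matrix.cons_val_fin_one, one_pow,
    mul_one]
  exact (Polynomial.natDegree_C_mul_X_pow_le _ _).trans (by omega)

lemma eval_aeval_X_one {R : Type*} [CommSemiring R] (p : MvPolynomial (Fin 2) R) (t : R) :
    (aeval ![Polynomial.X, 1] p).eval t = eval ![t, 1] p := by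
  rw [aeval_def, polynomial_eval_eval₂, ← eval₂_id]
  congr
  · ext; simp
  · ext i; fin_cases i <;> simp

end MvPolynomial

open MvPolynomial

theorem nonneg_binary_form_is_sum_two_squares (d : ℕ)
    (p : MvPolynomial (Fin 2) ℝ) (hp : p.IsHomogeneous (2 * d))
    (hnonneg : ∀ v : Fin 2 → ℝ, 0 ≤ eval v p) :
    ∃ q1 q2 : MvPolynomial (Fin 2) ℝ, p = q1 ^ 2 + q2 ^ 2 := by
  obtain ⟨a, b, hab⟩ := Polynomial.exists_eq_sq_add_sq_of_nonneg (aeval ![Polynomial.X, 1] p)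
    fun t => by simpa only [eval_aeval_X_one] using hnonneg ![t, 1]
  have hdeg := natDegree_aeval_X_one_le hp
  rw [hab, Polynomial.natDegree_sq_add_sq] at hdeg
  refine ⟨a.homogenize d, b.homogenize d, ?_⟩
  rw [← Polynomial.homogenize_eq_of_isHomogeneous hp hab, Polynomial.homogenize_add, two_mul,
    sq, sq, Polynomial.homogenize_mul _ _ (by omega) (by omega),
    Polynomial.homogenize_mul _ _ (by omega) (by omega), sq, sq]
end
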